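/- arXiv:2407.00479 — 6 statements merged into one kernel-verified Lean document; each statement's English description precedes it below -/
import Mathlib

section
/- Let A be a subset of B that is closed, monotone, and quasidense. Then A is maximally monotone. -/
open NormedSpace

noncomputable section

variable (E : Type*) [NormedAddCommGroup E] [NormedSpace ℝ E]

/-- `B = E × E*`. -/
abbrev BSp := E × StrongDual ℝ E

/-- `B* = E* × E**`. -/
abbrev BStar := StrongDual ℝ E × StrongDual ℝ (StrongDual ℝ E)

/-- `q(x, x*) = ⟨x, x*⟩`. -/
def qB (b : BSp E) : ℝ := b.2 b.1

/-- `r(b) = ½‖b‖² + q(b)`, where `‖(x,x*)‖² = ‖x‖² + ‖x*‖²`. -/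
def rB (b : BSp E) : ℝ := (‖b.1‖ ^ 2 + ‖b.2‖ ^ 2) / 2 + qB E b

/-- `q̃(y*, y**) = ⟨y*, y**⟩`. -/
def qS (p : BStar E) : ℝ := p.2 p.1

/-- `r̃(b*) = ½‖b*‖² + q̃(b*)`. -/
def rS (p : BStar E) : ℝ := (‖p.1‖ ^ 2 + ‖p.2‖ ^ 2) / 2 + qS E p

/-- The isometry `L(y, y*) = (y*, ŷ)`. -/
def LMap (b : BSp E) : BStar E := (b.2, inclusionInDoubleDual ℝ E b.1)

/-- A subset of `B` is monotone. -/
def IsMonot (A : Set (BSp E)) : Prop := ∀ d ∈ A, ∀ e ∈ A, 0 ≤ qB E (d - e)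

/-- A subset of `B` is maximally monotone. -/
def IsMaxMonot (A : Set (BSp E)) : Prop :=
  IsMonot E A ∧ ∀ A' : Set (BSp E), IsMonot E A' → A ⊆ A' → A' = A

/-- A subset of `B*` is monotone. -/
def IsMonotStar (N : Set (BStar E)) : Prop := ∀ d ∈ N, ∀ e ∈ N, 0 ≤ qS E (d - e)

/-- A subset of `B*` is maximally monotone. -/
def IsMaxMonotStar (N : Set (BStar E)) : Prop :=
  IsMonotStar E N ∧ ∀ N' : Set (BStar E), IsMonotStar E N' → N ⊆ N' → N' = N

/-- `A` is quasidense: `inf_{a ∈ A} r(a - b) = 0` for every `b ∈ B`. -/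
def Quasidense (A : Set (BSp E)) : Prop :=
  ∀ b : BSp E, (⨅ a ∈ A, (rB E (a - b) : EReal)) = 0

/-- `P_M(b) = −inf_{m ∈ M} q(m − b)`, an extended real. -/
def PFn (M : Set (BSp E)) (b : BSp E) : EReal := -(⨅ m ∈ M, (qB E (m - b) : EReal))

/-- `F_M(b*) = −inf_{b ∈ B} [P_M(b) + q̃(b* − Lb)]`. -/
def FFn (M : Set (BSp E)) (p : BStar E) : EReal :=
  -(⨅ b : BSp E, (PFn E M b + (qS E (p - LMap E b) : EReal)))

/-- `G_M(b*) = −inf_{m ∈ M} q̃(Lm − b*)`. -/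
def GFn (M : Set (BSp E)) (p : BStar E) : EReal :=
  -(⨅ m ∈ M, (qS E (LMap E m - p) : EReal))

/-- The Gossez extension `M^♯ = {b* : G_M(b*) ≤ 0}`. -/
def Sharp (M : Set (BSp E)) : Set (BStar E) := {p | GFn E M p ≤ 0}

/-- `M` is of type (NI): `G_M ≥ 0` on `B*`. -/
def TypeNI (M : Set (BSp E)) : Prop := ∀ p : BStar E, 0 ≤ GFn E M p

/-! If `b` is monotonically related to `A`, then `q(a - b) ≥ 0` for all `a ∈ A`, so
`‖a - b‖² ≤ 2 r(a - b)`; quasidensity makes the right-hand side arbitrarily small, hence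
`b ∈ closure A = A`. -/

variable {E}

lemma Quasidense.exists_rB_sub_lt {A : Set (BSp E)} (hA : Quasidense E A) (b : BSp E)
    {δ : ℝ} (hδ : 0 < δ) : ∃ a ∈ A, rB E (a - b) < δ := by
  have hinf : (⨅ a ∈ A, (rB E (a - b) : EReal)) < δ := by
    rw [hA b]
    exact_mod_cast hδ
  simpa only [iInf_lt_iff, EReal.coe_lt_coe_iff, exists_prop] using hinf

lemma norm_sq_le_two_mul_rB {c : BSp E} (hc : 0 ≤ qB E c) : ‖c‖ ^ 2 ≤ 2 * rB E c := by
  have h₁ : ‖c.1‖ ^ 2 ≤ 2 * rB E c := by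
    unfold rB
    nlinarith [sq_nonneg ‖c.2‖]
  have h₂ : ‖c.2‖ ^ 2 ≤ 2 * rB E c := by
    unfold rB
    nlinarith [sq_nonneg ‖c.1‖]
  rw [Prod.norm_def]
  rcases max_choice ‖c.1‖ ‖c.2‖ with h | h <;> rw [h] <;> assumption

lemma Quasidense.mem_closure_of_qB_sub_nonneg {A : Set (BSp E)} (hA : Quasidense E A)
    {b : BSp E} (hb : ∀ a ∈ A, 0 ≤ qB E (a - b)) : b ∈ closure A := by
  rw [Metric.mem_closure_iff]
  intro ε hε
  obtain ⟨a, ha, hr⟩ := hA.exists_rB_sub_lt b (half_pos (pow_pos hε 2))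
  have hsq : ‖a - b‖ ^ 2 < ε ^ 2 := by
    linarith [norm_sq_le_two_mul_rB (hb a ha)]
  exact ⟨a, ha, by rw [dist_comm, dist_eq_norm]; exact lt_of_pow_lt_pow_left₀ 2 hε.le hsq⟩

variable (E)

variable [CompleteSpace E] [Nontrivial E]

/-- A closed, monotone, quasidense subset of `B` is maximally monotone. -/
theorem closed_monotone_quasidense_isMaxMonot (A : Set (BSp E))
    (hclosed : IsClosed A) (hmono : IsMonot E A) (hqd : Quasidense E A) :
    IsMaxMonot E A := by
  refine ⟨hmono, fun A' hA' hAA' => Set.Subset.antisymm (fun b hb => ?_) hAA'⟩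
  rw [← hclosed.closure_eq]
  exact hqd.mem_closure_of_qB_sub_nonneg fun a ha => hA' a (hAA' ha) b hb
end
end

section
/- Let M be a maximally monotone subset of B and suppose that (P_M □ r)(b) ≤ 0 for all b ∈ B. Then for every c₁ ∈ B, inf_{m ∈ M} ¼‖m − c₁‖² ≤ P_M(c₁). -/
/-! The hypothesis `P_M □ r ≤ 0` lets one move from any `c` with `P_M(c) ≤ ρ` to a point `u` with
`‖u - c‖² ≤ 2ρ` and `P_M(u)` as small as desired. Iterating with `ρ` divided by 4 at each step gives
a Cauchy sequence; its limit `p` has `P_M(p) ≤ 0` by lower semicontinuity of `P_M`, so `p ∈ M` by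
maximality. The first step costs `‖u - c‖² ≤ 2 P_M(c)` and the rest is arbitrarily short, whence
`‖p - c‖² ≤ 4 P_M(c) + ε`. -/

open NormedSpace

noncomputable section

variable (E : Type*) [NormedAddCommGroup E] [NormedSpace ℝ E]

/-- `‖b‖²` for the Euclidean norm of `B`; Mathlib's norm on the product `E × E*` is the sup norm. -/
def normSqB (b : BSp E) : ℝ := ‖b.1‖ ^ 2 + ‖b.2‖ ^ 2

section

open Filter Topology

variable {E}

lemma qB_neg (b : BSp E) : qB E (-b) = qB E b := by
  simp [qB]

lemma qB_sub_comm (a b : BSp E) : qB E (a - b) = qB E (b - a) := by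
  rw [← neg_sub, qB_neg]

lemma continuous_qB : Continuous (qB E) :=
  continuous_snd.clm_apply continuous_fst

lemma qB_sub_lineMap (m c y : BSp E) (s : ℝ) :
    qB E (m - (c + s • (y - c))) =
      (1 - s) * qB E (m - c) + s * qB E (m - y) - s * (1 - s) * qB E (y - c) := by
  simp only [qB, Prod.fst_sub, Prod.snd_sub, Prod.fst_add, Prod.snd_add, Prod.smul_fst,
    Prod.smul_snd, sub_apply, add_apply, smul_apply, map_sub, map_add, map_smul, smul_eq_mul]
  ring

lemma normSqB_sub_comm (a b : BSp E) : normSqB E (a - b) = normSqB E (b - a) := by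
  simp only [normSqB, ← neg_sub a b, Prod.fst_neg, Prod.snd_neg, norm_neg]

lemma normSqB_smul (s : ℝ) (b : BSp E) : normSqB E (s • b) = s ^ 2 * normSqB E b := by
  simp only [normSqB, Prod.smul_fst, Prod.smul_snd, norm_smul, Real.norm_eq_abs, mul_pow, sq_abs]
  ring

lemma normSqB_add_le (a b : BSp E) : normSqB E (a + b) ≤ 2 * normSqB E a + 2 * normSqB E b := by
  have h₁ := norm_add_le a.1 b.1
  have h₂ := norm_add_le a.2 b.2
  simp only [normSqB, Prod.fst_add, Prod.snd_add]
  nlinarith [norm_nonneg (a.1 + b.1), norm_nonneg (a.2 + b.2), sq_nonneg (‖a.1‖ - ‖b.1‖),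
    sq_nonneg (‖a.2‖ - ‖b.2‖)]

lemma norm_sq_le_normSqB (b : BSp E) : ‖b‖ ^ 2 ≤ normSqB E b := by
  rw [Prod.norm_def, normSqB]
  rcases max_cases ‖b.1‖ ‖b.2‖ with ⟨h, -⟩ | ⟨h, -⟩ <;> rw [h]
  · exact le_add_of_nonneg_right (sq_nonneg _)
  · exact le_add_of_nonneg_left (sq_nonneg _)

lemma normSqB_le_two_mul_norm_sq (b : BSp E) : normSqB E b ≤ 2 * ‖b‖ ^ 2 := by
  have h₁ : ‖b.1‖ ^ 2 ≤ ‖b‖ ^ 2 := pow_le_pow_left₀ (norm_nonneg _) (norm_fst_le b) 2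
  have h₂ : ‖b.2‖ ^ 2 ≤ ‖b‖ ^ 2 := pow_le_pow_left₀ (norm_nonneg _) (norm_snd_le b) 2
  rw [normSqB]
  linarith

lemma rB_eq (b : BSp E) : rB E b = normSqB E b / 2 + qB E b := rfl

lemma rB_nonneg (b : BSp E) : 0 ≤ rB E b := by
  have h : |qB E b| ≤ ‖b.2‖ * ‖b.1‖ := b.2.le_opNorm b.1
  rw [rB_eq, normSqB]
  nlinarith [abs_le.mp h, sq_nonneg (‖b.1‖ - ‖b.2‖)]

lemma mem_of_forall_qB_nonneg {M : Set (BSp E)} (hM : IsMaxMonot E M) {z : BSp E}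
    (hz : ∀ m ∈ M, 0 ≤ qB E (m - z)) : z ∈ M := by
  have hmono : IsMonot E (insert z M) := by
    rintro d (rfl | hd) e (rfl | he)
    · simp [qB]
    · rw [qB_sub_comm]; exact hz e he
    · exact hz d hd
    · exact hM.1 d hd e he
  rw [← hM.2 _ hmono (Set.subset_insert z M)]
  exact Set.mem_insert z M

lemma PFn_le_coe_iff {M : Set (BSp E)} {b : BSp E} {ρ : ℝ} :
    PFn E M b ≤ ρ ↔ ∀ m ∈ M, -ρ ≤ qB E (m - b) := by
  simp only [PFn, EReal.neg_le, le_iInf₂_iff, ← EReal.coe_neg, EReal.coe_le_coe_iff]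

lemma neg_qB_le_PFn {M : Set (BSp E)} {b m : BSp E} (hm : m ∈ M) :
    ((-qB E (m - b) : ℝ) : EReal) ≤ PFn E M b := by
  rw [PFn, EReal.coe_neg, EReal.neg_le_neg_iff]
  exact iInf₂_le m hm

lemma PFn_nonneg {M : Set (BSp E)} (hM : IsMaxMonot E M) (b : BSp E) : 0 ≤ PFn E M b := by
  by_contra! hneg
  have hb : b ∈ M := mem_of_forall_qB_nonneg hM fun m hm ↦
    neg_zero (G := ℝ) ▸ PFn_le_coe_iff.1 (EReal.coe_zero ▸ hneg.le) m hm
  simpa [qB] using (neg_qB_le_PFn hb).trans_lt hneg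

lemma mem_of_tendsto_of_PFn_le {M : Set (BSp E)} (hM : IsMaxMonot E M) {ι : Type*}
    {l : Filter ι} [l.NeBot] {u : ι → BSp E} {ε : ι → ℝ} {p : BSp E}
    (hu : Tendsto u l (𝓝 p)) (hε : Tendsto ε l (𝓝 0))
    (hP : ∀ i, PFn E M (u i) ≤ ε i) : p ∈ M := by
  refine mem_of_forall_qB_nonneg hM fun m hm ↦ ?_
  have hq : Tendsto (fun i ↦ qB E (m - u i)) l (𝓝 (qB E (m - p))) :=
    (continuous_qB.tendsto _).comp (hu.const_sub m)
  simpa using le_of_tendsto_of_tendsto' hε.neg hq fun i ↦ PFn_le_coe_iff.1 (hP i) m hm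

lemma exists_PFn_le_rB_sub_le {M : Set (BSp E)} (hM : IsMaxMonot E M)
    (hconv : ∀ b : BSp E, (⨅ y : BSp E, (PFn E M y + (rB E (b - y) : EReal))) ≤ 0)
    (c : BSp E) {δ : ℝ} (hδ : 0 < δ) : ∃ y, PFn E M y ≤ δ ∧ rB E (c - y) ≤ δ := by
  obtain ⟨y, hy⟩ := iInf_lt_iff.1 ((hconv c).trans_lt (EReal.coe_pos.2 hδ))
  have hr : (0 : EReal) ≤ rB E (c - y) := EReal.coe_nonneg.2 (rB_nonneg _)
  exact ⟨y, (le_add_of_nonneg_right hr).trans hy.le,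
    EReal.coe_le_coe_iff.1 ((le_add_of_nonneg_left (PFn_nonneg hM y)).trans hy.le)⟩

/-- The point is `y` with `P_M(y) + r(c - y) ≤ δ`, or `c + s • (y - c)` with `s = 2ρ / ‖c - y‖²`
when `y` is too far from `c`; the quadratic identity `qB_sub_lineMap` then bounds `P_M` there by
`s (2 - s) δ ≤ δ`. -/
lemma exists_PFn_le_normSqB_sub_le {M : Set (BSp E)} (hM : IsMaxMonot E M)
    (hconv : ∀ b : BSp E, (⨅ y : BSp E, (PFn E M y + (rB E (b - y) : EReal))) ≤ 0)
    {c : BSp E} {ρ : ℝ} (hc : PFn E M c ≤ ρ) {δ : ℝ} (hδ : 0 < δ) :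
    ∃ u, PFn E M u ≤ δ ∧ normSqB E (u - c) ≤ 2 * ρ := by
  obtain ⟨y, hPy, hry⟩ := exists_PFn_le_rB_sub_le hM hconv c hδ
  set K := normSqB E (c - y)
  have hqyc : qB E (y - c) ≤ δ - K / 2 := by
    rw [rB_eq] at hry
    rw [qB_sub_comm]
    linarith
  by_cases hK : K ≤ 2 * ρ
  · exact ⟨y, hPy, normSqB_sub_comm c y ▸ hK⟩
  have hρ : 0 ≤ ρ := EReal.coe_nonneg.1 ((PFn_nonneg hM c).trans hc)
  have hKpos : 0 < K := by linarith
  set s := 2 * ρ / K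
  have hs₀ : 0 ≤ s := by positivity
  have hs₁ : s ≤ 1 := (div_le_one hKpos).2 (by linarith)
  have hsK : s * K = 2 * ρ := div_mul_cancel₀ _ hKpos.ne'
  refine ⟨c + s • (y - c), PFn_le_coe_iff.2 fun m hm ↦ ?_, ?_⟩
  · have h₁ := mul_le_mul_of_nonneg_left (PFn_le_coe_iff.1 hc m hm) (sub_nonneg.2 hs₁)
    have h₂ := mul_le_mul_of_nonneg_left (PFn_le_coe_iff.1 hPy m hm) hs₀
    have h₃ := mul_le_mul_of_nonneg_left hqyc (mul_nonneg hs₀ (sub_nonneg.2 hs₁))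
    rw [qB_sub_lineMap]
    nlinarith [mul_nonneg (sq_nonneg (1 - s)) hδ.le]
  · rw [add_sub_cancel_left, normSqB_smul, normSqB_sub_comm, sq, mul_assoc, hsK]
    nlinarith

lemma exists_mem_norm_sub_le [CompleteSpace E] {M : Set (BSp E)} (hM : IsMaxMonot E M)
    (hconv : ∀ b : BSp E, (⨅ y : BSp E, (PFn E M y + (rB E (b - y) : EReal))) ≤ 0)
    {u : BSp E} {η : ℝ} (hη : 0 < η) (hu : PFn E M u ≤ η) :
    ∃ p ∈ M, ‖u - p‖ ≤ 2 * √(2 * η) := by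
  have step : ∀ k (c : {c // PFn E M c ≤ (η * (1 / 4) ^ k : ℝ)}),
      ∃ c' : {c' // PFn E M c' ≤ (η * (1 / 4) ^ (k + 1) : ℝ)},
        normSqB E (c'.1 - c.1) ≤ 2 * (η * (1 / 4) ^ k) :=
    fun k c ↦ by
      obtain ⟨c', hc', hnorm⟩ := exists_PFn_le_normSqB_sub_le hM hconv c.2
        (δ := η * (1 / 4) ^ (k + 1)) (by positivity)
      exact ⟨⟨c', hc'⟩, hnorm⟩
  choose next hnext using step
  let v : ∀ k, {c // PFn E M c ≤ (η * (1 / 4) ^ k : ℝ)} :=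
    fun k ↦ Nat.rec ⟨u, by simpa using hu⟩ next k
  have hdist : ∀ k, dist (v k).1 (v (k + 1)).1 ≤ √(2 * η) * (1 / 2) ^ k := fun k ↦ by
    have hsq : (√(2 * η) * (1 / 2) ^ k) ^ 2 = 2 * (η * (1 / 4) ^ k) := by
      rw [mul_pow, Real.sq_sqrt (by positivity), ← pow_mul, mul_comm k, pow_mul]
      ring
    rw [dist_comm, dist_eq_norm, ← sq_le_sq₀ (norm_nonneg _) (by positivity), hsq]
    exact (norm_sq_le_normSqB _).trans (hnext k (v k))
  obtain ⟨p, hp⟩ := cauchySeq_tendsto_of_complete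
    (cauchySeq_of_le_geometric (1 / 2) _ (by norm_num) hdist)
  have hρ : Tendsto (fun k : ℕ ↦ η * (1 / 4) ^ k) atTop (𝓝 0) := by
    simpa using (tendsto_pow_atTop_nhds_zero_of_lt_one (r := (1 / 4 : ℝ))
      (by norm_num) (by norm_num)).const_mul η
  have hpM : p ∈ M := mem_of_tendsto_of_PFn_le hM hp hρ fun k ↦ (v k).2
  refine ⟨p, hpM, ?_⟩
  have hup := dist_le_of_le_geometric_of_tendsto₀ (1 / 2) _ (by norm_num) hdist hp
  calc ‖u - p‖ = dist (v 0).1 p := (dist_eq_norm _ _).symm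
    _ ≤ √(2 * η) / (1 - 1 / 2) := hup
    _ = 2 * √(2 * η) := by ring

lemma exists_mem_normSqB_sub_le [CompleteSpace E] {M : Set (BSp E)} (hM : IsMaxMonot E M)
    (hconv : ∀ b : BSp E, (⨅ y : BSp E, (PFn E M y + (rB E (b - y) : EReal))) ≤ 0)
    {c : BSp E} {μ : ℝ} (hc : PFn E M c ≤ μ) {η : ℝ} (hη : 0 < η) :
    ∃ p ∈ M, normSqB E (p - c) ≤ 4 * μ + 32 * η := by
  obtain ⟨u, hu, huc⟩ := exists_PFn_le_normSqB_sub_le hM hconv hc hη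
  obtain ⟨p, hp, hup⟩ := exists_mem_norm_sub_le hM hconv hη hu
  have hpu : normSqB E (p - u) ≤ 16 * η :=
    calc normSqB E (p - u) ≤ 2 * ‖p - u‖ ^ 2 := normSqB_le_two_mul_norm_sq _
      _ ≤ 2 * (2 * √(2 * η)) ^ 2 := by rw [norm_sub_rev]; gcongr
      _ = 16 * η := by rw [mul_pow, Real.sq_sqrt (by positivity)]; ring
  refine ⟨p, hp, ?_⟩
  calc normSqB E (p - c) = normSqB E ((p - u) + (u - c)) := by rw [sub_add_sub_cancel]
    _ ≤ 2 * normSqB E (p - u) + 2 * normSqB E (u - c) := normSqB_add_le _ _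
    _ ≤ 4 * μ + 32 * η := by linarith

end

variable [CompleteSpace E] [Nontrivial E]

/-- If `(P_M □ r) ≤ 0` on `B`, then for every `c₁`,
`inf_{m ∈ M} ¼‖m − c₁‖² ≤ P_M(c₁)`. -/
theorem inf_quarter_norm_sq_le_PFun (M : Set (BSp E)) (hM : IsMaxMonot E M)
    (hconv : ∀ b : BSp E, (⨅ y : BSp E, (PFn E M y + (rB E (b - y) : EReal))) ≤ 0)
    (c₁ : BSp E) :
    (⨅ m ∈ M, (((‖(m - c₁).1‖ ^ 2 + ‖(m - c₁).2‖ ^ 2) / 4 : ℝ) : EReal)) ≤ PFn E M c₁ := by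
  refine EReal.le_of_forall_lt_iff_le.1 fun z hz ↦ ?_
  obtain ⟨μ, hcμ, hμz⟩ := EReal.exists_between_coe_real hz
  have hμz : μ < z := EReal.coe_lt_coe_iff.1 hμz
  obtain ⟨p, hp, hpc⟩ :=
    exists_mem_normSqB_sub_le hM hconv hcμ.le (η := (z - μ) / 8) (by linarith)
  calc _ ≤ ((normSqB E (p - c₁) / 4 : ℝ) : EReal) := iInf₂_le p hp
    _ ≤ z := EReal.coe_le_coe_iff.2 (by linarith)
end
end

section
/- Let M be a maximally monotone subset of B. Then for every c ∈ B, (P_M □ r)(c) = −inf_{b* ∈ B*} [F_M(b*) + r̃(Lc − b*)], and moreover the infimum on the right-hand side is attained: there exists b* ∈ B* with F_M(b*) + r̃(Lc − b*) = inf_{a* ∈ B*} [F_M(a*) + r̃(Lc − a*)]. -/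
open NormedSpace

noncomputable section

variable (E : Type*) [NormedAddCommGroup E] [NormedSpace ℝ E]

variable [CompleteSpace E] [Nontrivial E]

/-!
Write `Φ = P_M + q`. This is the Fitzpatrick function `b ↦ sup_{m ∈ M} (⟨b, Lm⟩ - q(m))`, so its
epigraph is convex, and `P_M(b) + r(c - b) = Φ(b) + g(b)` where
`g(b) = r(c - b) - q(b) = ½‖c - b‖² + q(c) - ⟨b, Lc⟩` is convex and continuous: the left-hand
side is the value of a Fenchel–Rockafellar primal problem. Its perturbation
`u ↦ inf_b [Φ(b) + g(b + u)]` is finite (`Φ` has the affine minorants `⟨·, Lm⟩ - q(m)`, and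
`Φ(m) ≤ q(m)` on `M` by monotonicity), convex, and bounded above near `0`, hence continuous, so
Hahn–Banach gives it a subgradient at `0`. Read in `B* = E* × E**`, this subgradient attains the
dual infimum. Both directions rest on `½‖·‖²` being its own conjugate: Fenchel–Young gives weak
duality in the pointwise form `q̃(b* - Lb) ≤ r(c - b) + r̃(Lc - b*)`, and its approximate
equality case closes the gap at the subgradient.
-/

open Set Filter Topology

/-- Half the square of the Euclidean norm `(‖x‖² + ‖y‖²)^{1/2}` that `B` and `B*` carry; the norm
of `X × Y` in Mathlib is the max norm instead. -/
def halfSqNorm {X Y : Type*} [Norm X] [Norm Y] (p : X × Y) : ℝ := (‖p.1‖ ^ 2 + ‖p.2‖ ^ 2) / 2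

section HalfSqNorm

variable {X Y : Type*} [NormedAddCommGroup X] [NormedSpace ℝ X]
  [NormedAddCommGroup Y] [NormedSpace ℝ Y]

lemma abs_apply_le_half_sq (φ : StrongDual ℝ X) (x : X) :
    |φ x| ≤ (‖x‖ ^ 2 + ‖φ‖ ^ 2) / 2 := by
  have h := φ.le_opNorm x
  rw [Real.norm_eq_abs] at h
  nlinarith [sq_nonneg (‖x‖ - ‖φ‖)]

lemma exists_half_sq_sub_apply_lt (φ : StrongDual ℝ X) {ε : ℝ} (hε : 0 < ε) :
    ∃ x : X, (‖x‖ ^ 2 + ‖φ‖ ^ 2) / 2 - φ x < ε := by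
  rcases (norm_nonneg φ).eq_or_lt with h0 | hpos
  · exact ⟨0, by simpa [← h0] using hε⟩
  obtain ⟨x, hx1, hx⟩ := φ.exists_lt_apply_of_lt_opNorm (sub_lt_self ‖φ‖ (div_pos hε hpos))
  obtain ⟨x', hx'1, hx'⟩ : ∃ x' : X, ‖x'‖ < 1 ∧ ‖φ‖ - ε / ‖φ‖ < φ x' := by
    rcases le_or_gt 0 (φ x) with h | h
    · exact ⟨x, hx1, by rwa [Real.norm_of_nonneg h] at hx⟩
    · exact ⟨-x, by rwa [norm_neg], by rwa [map_neg, ← abs_of_neg h, ← Real.norm_eq_abs]⟩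
  -- `‖φ‖ • x'` with `x'` an almost norming unit vector
  refine ⟨‖φ‖ • x', ?_⟩
  have hnorm : ‖‖φ‖ • x'‖ ≤ ‖φ‖ := by
    rw [norm_smul, norm_norm]; exact mul_le_of_le_one_right hpos.le hx'1.le
  have hval : φ (‖φ‖ • x') = ‖φ‖ * φ x' := by rw [map_smul, smul_eq_mul]
  have hmul : ‖φ‖ * (‖φ‖ - ε / ‖φ‖) = ‖φ‖ ^ 2 - ε := by field_simp
  rw [hval]
  nlinarith [mul_lt_mul_of_pos_left hx' hpos, pow_le_pow_left₀ (norm_nonneg _) hnorm 2]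

lemma abs_coprod_apply_le (p : StrongDual ℝ X × StrongDual ℝ Y) (y : X × Y) :
    |p.1.coprod p.2 y| ≤ halfSqNorm y + halfSqNorm p := by
  rw [ContinuousLinearMap.coprod_apply]
  have h1 := abs_apply_le_half_sq p.1 y.1
  have h2 := abs_apply_le_half_sq p.2 y.2
  unfold halfSqNorm
  linarith [abs_add_le (p.1 y.1) (p.2 y.2)]

lemma exists_halfSqNorm_sub_coprod_apply_lt (p : StrongDual ℝ X × StrongDual ℝ Y) {ε : ℝ}
    (hε : 0 < ε) : ∃ y : X × Y, halfSqNorm y + halfSqNorm p - p.1.coprod p.2 y < ε := by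
  obtain ⟨x, hx⟩ := exists_half_sq_sub_apply_lt p.1 (half_pos hε)
  obtain ⟨y, hy⟩ := exists_half_sq_sub_apply_lt p.2 (half_pos hε)
  refine ⟨(x, y), ?_⟩
  rw [ContinuousLinearMap.coprod_apply]
  unfold halfSqNorm
  linarith

lemma convexOn_univ_norm_sq : ConvexOn ℝ univ (fun x : X => ‖x‖ ^ 2) :=
  (convexOn_norm convex_univ).pow (fun x _ => norm_nonneg x) 2

lemma convexOn_halfSqNorm : ConvexOn ℝ univ (halfSqNorm : X × Y → ℝ) := by
  refine ⟨convex_univ, fun x _ y _ a b ha hb hab => ?_⟩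
  have h1 := convexOn_univ_norm_sq.2 (mem_univ x.1) (mem_univ y.1) ha hb hab
  have h2 := convexOn_univ_norm_sq.2 (mem_univ x.2) (mem_univ y.2) ha hb hab
  simp only [smul_eq_mul] at h1 h2 ⊢
  simp only [halfSqNorm, Prod.fst_add, Prod.snd_add, Prod.smul_fst, Prod.smul_snd]
  linarith

end HalfSqNorm

section Subgradient

variable {X : Type*} [NormedAddCommGroup X] [NormedSpace ℝ X]

theorem ConvexOn.exists_strongDual_add_le {v : X → ℝ} (hv : ConvexOn ℝ univ v)
    (hc : Continuous v) (x₀ : X) : ∃ φ : StrongDual ℝ X, ∀ x, v x₀ + φ (x - x₀) ≤ v x := by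
  have hopen : IsOpen {p : X × ℝ | v p.1 < p.2} :=
    isOpen_lt (hc.comp continuous_fst) continuous_snd
  have hconv : Convex ℝ {p : X × ℝ | v p.1 < p.2} := by
    simpa using hv.convex_strict_epigraph
  -- separate `(x₀, v x₀)` from the open strict epigraph; the separating functional has
  -- negative vertical part `α`, and `-α⁻¹` times its horizontal part is the subgradient
  obtain ⟨f, hf⟩ := geometric_hahn_banach_open_point hconv hopen
    (show (x₀, v x₀) ∉ {p : X × ℝ | v p.1 < p.2} by simp)
  set α := f (0, 1)
  have hsplit : ∀ x t, f (x, t) = f (ContinuousLinearMap.inl ℝ X ℝ x) + t * α := fun x t => by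
    rw [← smul_eq_mul, ← map_smul, ← map_add]; simp
  have hα : α < 0 := by
    have h := hf (x₀, v x₀ + 1) (by simp)
    rw [hsplit x₀, hsplit x₀] at h
    linarith
  refine ⟨-α⁻¹ • f.comp (ContinuousLinearMap.inl ℝ X ℝ), fun x => ?_⟩
  refine le_of_forall_gt_imp_ge_of_dense fun t ht => ?_
  have h := hf (x, t) ht
  rw [hsplit x, hsplit x₀] at h
  have h' := mul_lt_mul_of_neg_left (by linarith : f (ContinuousLinearMap.inl ℝ X ℝ x) -
    f (ContinuousLinearMap.inl ℝ X ℝ x₀) < α * (v x₀ - t)) (inv_lt_zero.2 hα)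
  rw [inv_mul_cancel_left₀ hα.ne] at h'
  simp only [smul_apply, ContinuousLinearMap.comp_apply, map_sub, smul_eq_mul]
  linarith

end Subgradient

section Perturbation

variable {X : Type*} [Add X] {f : X → EReal} {g : X → ℝ} {x₀ : X}

def perturbedInf (f : X → EReal) (g : X → ℝ) (u : X) : EReal := ⨅ x, f x + g (x + u)

lemma perturbedInf_le (x u : X) : perturbedInf f g u ≤ f x + g (x + u) := iInf_le _ x

lemma exists_le_of_perturbedInf_lt {u : X} {t : ℝ} (h : perturbedInf f g u < t) :
    ∃ x, f x ≤ ((t - g (x + u) : ℝ) : EReal) := by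
  obtain ⟨x, hx⟩ := iInf_lt_iff.1 h
  refine ⟨x, ?_⟩
  rw [EReal.coe_sub]
  exact (EReal.le_sub_iff_add_le (.inl (EReal.coe_ne_bot _)) (.inl (EReal.coe_ne_top _))).2 hx.le

lemma coe_toReal_perturbedInf (hx₀ : f x₀ ≠ ⊤) (hbot : ∀ u, perturbedInf f g u ≠ ⊥) (u : X) :
    ((perturbedInf f g u).toReal : EReal) = perturbedInf f g u :=
  EReal.coe_toReal (ne_top_of_le_ne_top (EReal.add_ne_top hx₀ (EReal.coe_ne_top _))
    (perturbedInf_le x₀ u)) (hbot u)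

lemma toReal_perturbedInf_le (hx₀ : f x₀ ≠ ⊤) (hbot : ∀ u, perturbedInf f g u ≠ ⊥) (u : X) :
    (perturbedInf f g u).toReal ≤ (f x₀).toReal + g (x₀ + u) := by
  rw [← EReal.coe_le_coe_iff, coe_toReal_perturbedInf hx₀ hbot, EReal.coe_add]
  exact (perturbedInf_le x₀ u).trans (by gcongr; exact EReal.le_coe_toReal hx₀)

end Perturbation

section PerturbationDuality

variable {X : Type*} [NormedAddCommGroup X] [NormedSpace ℝ X] {f : X → EReal} {g : X → ℝ}
  {x₀ : X}

lemma convexOn_toReal_perturbedInf (hx₀ : f x₀ ≠ ⊤) (hbot : ∀ u, perturbedInf f g u ≠ ⊥)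
    (hf : Convex ℝ {p : X × ℝ | f p.1 ≤ p.2}) (hg : ConvexOn ℝ univ g) :
    ConvexOn ℝ univ fun u => (perturbedInf f g u).toReal := by
  refine ⟨convex_univ, fun u₁ _ u₂ _ a b ha hb hab => le_of_forall_pos_le_add fun ε hε => ?_⟩
  have happrox (u : X) : ∃ x, f x ≤ (((perturbedInf f g u).toReal + ε - g (x + u) : ℝ) : EReal) :=
    exists_le_of_perturbedInf_lt <| (coe_toReal_perturbedInf hx₀ hbot u).symm.trans_lt <|
      EReal.coe_lt_coe_iff.2 (lt_add_of_pos_right _ hε)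
  obtain ⟨x₁, hx₁⟩ := happrox u₁
  obtain ⟨x₂, hx₂⟩ := happrox u₂
  have hfx := hf (show (x₁, _) ∈ {p : X × ℝ | f p.1 ≤ p.2} from hx₁)
    (show (x₂, _) ∈ {p : X × ℝ | f p.1 ≤ p.2} from hx₂) ha hb hab
  have hgx := hg.2 (mem_univ (x₁ + u₁)) (mem_univ (x₂ + u₂)) ha hb hab
  have hsum : (a • x₁ + b • x₂) + (a • u₁ + b • u₂) = a • (x₁ + u₁) + b • (x₂ + u₂) := by
    simp only [smul_add]; abel
  have key := (perturbedInf_le (g := g) (a • x₁ + b • x₂) (a • u₁ + b • u₂)).trans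
    (add_le_add hfx (EReal.coe_le_coe_iff.2 (hsum ▸ hgx)))
  rw [← coe_toReal_perturbedInf hx₀ hbot, ← EReal.coe_add, EReal.coe_le_coe_iff] at key
  simp only [Prod.snd_add, Prod.smul_snd, smul_eq_mul] at key ⊢
  nlinarith

lemma continuous_toReal_perturbedInf (hx₀ : f x₀ ≠ ⊤) (hbot : ∀ u, perturbedInf f g u ≠ ⊥)
    (hf : Convex ℝ {p : X × ℝ | f p.1 ≤ p.2}) (hg : ConvexOn ℝ univ g) (hgc : Continuous g) :
    Continuous fun u => (perturbedInf f g u).toReal := by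
  have hbdd : (𝓝 (0 : X)).IsBoundedUnder (· ≤ ·) fun u => (perturbedInf f g u).toReal :=
    ((continuous_const.add (hgc.comp (continuous_const_add x₀))).tendsto 0).isBoundedUnder_le
      |>.mono_le (Eventually.of_forall (toReal_perturbedInf_le hx₀ hbot))
  rw [← continuousOn_univ]
  have htfae := (convexOn_toReal_perturbedInf hx₀ hbot hf hg).continuousOn_tfae isOpen_univ
    univ_nonempty
  have h31 : (∃ u ∈ univ, (𝓝 u).IsBoundedUnder (· ≤ ·) fun u => (perturbedInf f g u).toReal) →
      ContinuousOn (fun u => (perturbedInf f g u).toReal) univ := (htfae.out 3 1).mp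
  exact h31 ⟨0, mem_univ _, hbdd⟩

theorem exists_strongDual_le_of_perturbedInf (hx₀ : f x₀ ≠ ⊤)
    (hbot : ∀ u, perturbedInf f g u ≠ ⊥) (hf : Convex ℝ {p : X × ℝ | f p.1 ≤ p.2})
    (hg : ConvexOn ℝ univ g) (hgc : Continuous g) :
    ∃ φ : StrongDual ℝ X, ∀ x z,
      (((perturbedInf f g 0).toReal + φ (x - z) - g z : ℝ) : EReal) ≤ f x := by
  obtain ⟨ψ, hψ⟩ := (convexOn_toReal_perturbedInf hx₀ hbot hf hg).exists_strongDual_add_le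
    (continuous_toReal_perturbedInf hx₀ hbot hf hg hgc) 0
  refine ⟨-ψ, fun x z => ?_⟩
  rw [EReal.coe_sub]
  refine EReal.sub_le_of_le_add ?_
  have hψ' := hψ (z - x)
  rw [sub_zero, ← EReal.coe_le_coe_iff, coe_toReal_perturbedInf hx₀ hbot] at hψ'
  have h := hψ'.trans (perturbedInf_le x (z - x))
  rwa [add_sub_cancel, ← neg_sub, map_neg, ← neg_apply] at h

end PerturbationDuality

section Pairing

variable {E : Type*} [NormedAddCommGroup E] [NormedSpace ℝ E]

def pairB (p : BStar E) : StrongDual ℝ (BSp E) := p.1.coprod p.2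

@[simp] lemma pairB_apply (p : BStar E) (b : BSp E) : pairB p b = p.1 b.1 + p.2 b.2 := rfl

lemma qB_sub_qB_sub (m b : BSp E) : qB E b - qB E (m - b) = pairB (LMap E m) b - qB E m := by
  simp [qB, LMap, dual_def]; ring

lemma rB_sub_sub_qB (c b : BSp E) :
    rB E (c - b) - qB E b = halfSqNorm (c - b) + qB E c - pairB (LMap E c) b := by
  simp [rB, qB, LMap, halfSqNorm, dual_def]; ring

lemma qS_sub_LMap (p : BStar E) (b : BSp E) :
    qS E (p - LMap E b) = qS E p - pairB p b + qB E b := by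
  simp [qS, qB, LMap, dual_def]; ring

lemma qS_sub_LMap_le (c b : BSp E) (p : BStar E) :
    qS E (p - LMap E b) ≤ rB E (c - b) + rS E (LMap E c - p) := by
  have hFY := abs_coprod_apply_le (LMap E c - p) (c - b)
  rw [← pairB, abs_le] at hFY
  have key : rB E (c - b) + rS E (LMap E c - p) - qS E (p - LMap E b) =
      halfSqNorm (c - b) + halfSqNorm (LMap E c - p) + pairB (LMap E c - p) (c - b) := by
    simp [rB, rS, qS, qB, LMap, halfSqNorm, dual_def]; ring
  linarith [hFY.1]

lemma exists_sub_qB_add_pairB_lt (c : BSp E) (p : BStar E) {ε : ℝ} (hε : 0 < ε) :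
    ∃ z, rB E (c - z) - qB E z + pairB p z - qS E p + rS E (LMap E c - p) < ε := by
  obtain ⟨y, hy⟩ := exists_halfSqNorm_sub_coprod_apply_lt (LMap E c - p) hε
  refine ⟨c + y, ?_⟩
  have key : rB E (c - (c + y)) - qB E (c + y) + pairB p (c + y) - qS E p + rS E (LMap E c - p) =
      halfSqNorm y + halfSqNorm (LMap E c - p) - pairB (LMap E c - p) y := by
    simp [rB, rS, qS, qB, LMap, halfSqNorm, dual_def]; ring
  rw [key]
  exact hy

lemma convexOn_rB_sub_sub_qB (c : BSp E) : ConvexOn ℝ univ fun b => rB E (c - b) - qB E b := by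
  have hsq : ConvexOn ℝ univ fun b : BSp E => halfSqNorm (c - b) := by
    refine ⟨convex_univ, fun x _ y _ a b ha hb hab => ?_⟩
    have e : c - (a • x + b • y) = a • (c - x) + b • (c - y) := by
      linear_combination (norm := module) (-hab) • c
    simpa only [e] using convexOn_halfSqNorm.2 (mem_univ (c - x)) (mem_univ (c - y)) ha hb hab
  simp_rw [rB_sub_sub_qB]
  exact (hsq.add_const _).sub ((pairB (LMap E c)).toLinearMap.concaveOn convex_univ)

lemma continuous_rB_sub_sub_qB (c : BSp E) : Continuous fun b => rB E (c - b) - qB E b := by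
  simp_rw [rB_sub_sub_qB]
  unfold halfSqNorm
  fun_prop

end Pairing

lemma EReal.neg_add_coe_le_neg_add_coe_add (a : EReal) {x y z : ℝ} (h : y ≤ x + z) :
    -(a + x) ≤ -(a + y) + z := by
  induction a using EReal.rec with
  | bot => simp
  | coe a => norm_cast; linarith
  | top => simp

section Fitzpatrick

variable {E : Type*} [NormedAddCommGroup E] [NormedSpace ℝ E] {M : Set (BSp E)}

lemma IsMaxMonot.nonempty (hM : IsMaxMonot E M) : M.Nonempty := by
  rw [nonempty_iff_ne_empty]
  rintro rfl
  have h0 : IsMonot E ({0} : Set (BSp E)) := by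
    rintro d rfl e rfl
    simp [qB]
  exact singleton_ne_empty _ (hM.2 _ h0 (empty_subset _))

def fitzpatrick (M : Set (BSp E)) (b : BSp E) : EReal := PFn E M b + qB E b

lemma fitzpatrick_le_coe_iff {b : BSp E} {t : ℝ} :
    fitzpatrick M b ≤ t ↔ ∀ m ∈ M, pairB (LMap E m) b - qB E m ≤ t := by
  rw [fitzpatrick, ← EReal.le_sub_iff_add_le (.inl (EReal.coe_ne_bot _))
    (.inl (EReal.coe_ne_top _)), ← EReal.coe_sub, PFn, EReal.neg_le, le_iInf₂_iff]
  refine forall₂_congr fun m _ => ?_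
  rw [← EReal.coe_neg, EReal.coe_le_coe_iff, ← qB_sub_qB_sub]
  constructor <;> intro h <;> linarith

lemma coe_le_fitzpatrick {m : BSp E} (hm : m ∈ M) (b : BSp E) :
    ((pairB (LMap E m) b - qB E m : ℝ) : EReal) ≤ fitzpatrick M b := by
  have h : ((-qB E (m - b) : ℝ) : EReal) ≤ PFn E M b :=
    EReal.neg_le_neg_iff.2 (iInf₂_le (f := fun m _ => (qB E (m - b) : EReal)) m hm)
  rw [← qB_sub_qB_sub, sub_eq_neg_add, EReal.coe_add, fitzpatrick]
  exact add_le_add_left h _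

lemma fitzpatrick_le_qB (hM : IsMonot E M) {m : BSp E} (hm : m ∈ M) :
    fitzpatrick M m ≤ qB E m :=
  fitzpatrick_le_coe_iff.2 fun m' hm' => by
    linarith [qB_sub_qB_sub m' m, hM m' hm' m hm]

lemma convex_epigraph_fitzpatrick (M : Set (BSp E)) :
    Convex ℝ {p : BSp E × ℝ | fitzpatrick M p.1 ≤ p.2} := by
  have h : {p : BSp E × ℝ | fitzpatrick M p.1 ≤ p.2} =
      ⋂ m ∈ M, {p | (pairB (LMap E m) ∘L ContinuousLinearMap.fst ℝ (BSp E) ℝ -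
        ContinuousLinearMap.snd ℝ (BSp E) ℝ : BSp E × ℝ →L[ℝ] ℝ) p ≤ qB E m} := by
    ext p
    simp only [mem_ofPred_eq, fitzpatrick_le_coe_iff, mem_iInter]
    refine forall₂_congr fun m _ => ?_
    simp only [sub_apply, ContinuousLinearMap.comp_apply,
      ContinuousLinearMap.coe_fst', ContinuousLinearMap.coe_snd']
    constructor <;> intro h <;> linarith
  rw [h]
  exact convex_iInter₂ fun m _ => convex_halfSpace_le (LinearMap.isLinear _) _

lemma perturbedInf_fitzpatrick_ne_bot {m : BSp E} (hm : m ∈ M) (c u : BSp E) :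
    perturbedInf (fitzpatrick M) (fun b => rB E (c - b) - qB E b) u ≠ ⊥ := by
  -- the affine minorant of `fitzpatrick M` given by `m`, plus Fenchel–Young against the
  -- quadratic part of `g`
  set ζ := LMap E m - LMap E c
  refine ne_bot_of_le_ne_bot (EReal.coe_ne_bot
    (qB E c - qB E m + pairB ζ (c - u) - pairB (LMap E c) u - halfSqNorm ζ))
    (le_iInf fun b => le_trans ?_ (add_le_add_left (coe_le_fitzpatrick hm b) _))
  rw [← EReal.coe_add, EReal.coe_le_coe_iff]
  simp only [rB_sub_sub_qB]
  have hFY := abs_coprod_apply_le ζ (c - (b + u))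
  rw [← pairB, abs_le] at hFY
  have e1 : pairB ζ (c - (b + u)) = pairB ζ (c - u) - pairB ζ b := by
    rw [← map_sub]; congr 1; abel
  have e2 : pairB ζ b = pairB (LMap E m) b - pairB (LMap E c) b := by
    simp [ζ]; ring
  have e3 := map_add (pairB (LMap E c)) b u
  linarith [hFY.1]

lemma neg_iInf_PFn_add_rB_le_FFn_add_rS (c : BSp E) (p : BStar E) :
    -(⨅ b, PFn E M b + (rB E (c - b) : EReal)) ≤ FFn E M p + rS E (LMap E c - p) :=
  EReal.neg_le.2 <| le_iInf fun b => EReal.neg_le.1 <|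
    (EReal.neg_add_coe_le_neg_add_coe_add _ (qS_sub_LMap_le c b p)).trans
      (add_le_add_left (EReal.neg_le_neg_iff.2
        (iInf_le (fun b => PFn E M b + (qS E (p - LMap E b) : EReal)) b)) _)

lemma FFn_add_rS_le (c : BSp E) (p : BStar E) {v : ℝ}
    (hp : ∀ b z, ((v + pairB p (b - z) - (rB E (c - z) - qB E z) : ℝ) : EReal) ≤
      fitzpatrick M b) :
    FFn E M p + rS E (LMap E c - p) ≤ ((-v : ℝ) : EReal) := by
  refine EReal.le_of_forall_lt_iff_le.1 fun t ht => ?_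
  obtain ⟨z, hz⟩ := exists_sub_qB_add_pairB_lt c p (ε := t + v)
    (by linarith [EReal.coe_lt_coe_iff.1 ht])
  have hF : FFn E M p ≤ ((-v + (rB E (c - z) - qB E z + pairB p z - qS E p) : ℝ) : EReal) := by
    rw [FFn, EReal.neg_le, ← EReal.coe_neg]
    refine le_iInf fun b => ?_
    have h := add_le_add_left (hp b z) ((qS E p - pairB p b : ℝ) : EReal)
    rw [fitzpatrick, add_assoc, ← EReal.coe_add, ← EReal.coe_add] at h
    rw [qS_sub_LMap]
    convert h using 2
    · rw [map_sub]; ring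
    · congr 1; ring
  calc FFn E M p + rS E (LMap E c - p)
      ≤ ((-v + (rB E (c - z) - qB E z + pairB p z - qS E p) : ℝ) : EReal) +
          rS E (LMap E c - p) := add_le_add_left hF _
    _ ≤ t := by
      rw [← EReal.coe_add, EReal.coe_le_coe_iff]
      linarith

end Fitzpatrick

/-- `(P_M □ r)(c) = −inf_{b*} [F_M(b*) + r̃(Lc − b*)]`, and the
infimum on the right-hand side is attained. -/
theorem PFun_infConv_r_eq_neg_FFun_infConvExact_rS (M : Set (BSp E)) (hM : IsMaxMonot E M)
    (c : BSp E) :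
    (⨅ b : BSp E, (PFn E M b + (rB E (c - b) : EReal))) =
      -(⨅ p : BStar E, (FFn E M p + (rS E (LMap E c - p) : EReal))) ∧
    ∃ p : BStar E, FFn E M p + (rS E (LMap E c - p) : EReal) =
      ⨅ p' : BStar E, (FFn E M p' + (rS E (LMap E c - p') : EReal)) := by
  obtain ⟨m₀, hm₀⟩ := hM.nonempty
  have hx₀ : fitzpatrick M m₀ ≠ ⊤ :=
    ((fitzpatrick_le_qB hM.1 hm₀).trans_lt (EReal.coe_lt_top _)).ne
  have hbot := perturbedInf_fitzpatrick_ne_bot hm₀ c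
  obtain ⟨φ, hφ⟩ := exists_strongDual_le_of_perturbedInf hx₀ hbot
    (convex_epigraph_fitzpatrick M) (convexOn_rB_sub_sub_qB c) (continuous_rB_sub_sub_qB c)
  set v := (perturbedInf (fitzpatrick M) (fun b => rB E (c - b) - qB E b) 0).toReal
  have hprimal : (⨅ b, PFn E M b + (rB E (c - b) : EReal)) = (v : EReal) := by
    rw [coe_toReal_perturbedInf hx₀ hbot]
    refine iInf_congr fun b => ?_
    rw [add_zero, fitzpatrick, add_assoc, ← EReal.coe_add, add_sub_cancel]
  let p : BStar E := (φ ∘L .inl ℝ E (StrongDual ℝ E), φ ∘L .inr ℝ E (StrongDual ℝ E))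
  have hp : FFn E M p + rS E (LMap E c - p) ≤ ((-v : ℝ) : EReal) :=
    FFn_add_rS_le c p fun b z => by simpa [pairB, p] using hφ b z
  have hweak (p' : BStar E) : ((-v : ℝ) : EReal) ≤ FFn E M p' + rS E (LMap E c - p') := by
    rw [EReal.coe_neg, ← hprimal]
    exact neg_iInf_PFn_add_rB_le_FFn_add_rS c p'
  have hdual : (⨅ p', FFn E M p' + (rS E (LMap E c - p') : EReal)) = ((-v : ℝ) : EReal) :=
    le_antisymm ((iInf_le _ p).trans hp) (le_iInf hweak)
  refine ⟨by rw [hprimal, hdual, EReal.coe_neg, neg_neg], p, ?_⟩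
  rw [hdual]
  exact le_antisymm hp (hweak p)
end
end

section
/- Let M be a maximally monotone subset of B such that for every x* ∈ E* there exists x ∈ E with (x,x*) ∈ M. Then M is of type (NI). If, in addition, L(M) is a maximally monotone subset of B*, then M^♯ = L(M). -/
open NormedSpace

noncomputable section

variable (E : Type*) [NormedAddCommGroup E] [NormedSpace ℝ E]

variable [CompleteSpace E] [Nontrivial E]

/-! If every `x*` is the second coordinate of a point of `M`, then for any `b* = (y*, y**)` the
point `m = (x, y*) ∈ M` gives `Lm − b* = (0, x̂ − y**)`, on which `q̃` vanishes; hence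
`inf_{m ∈ M} q̃(Lm − b*) ≤ 0`, i.e. `G_M(b*) ≥ 0`. For the second part, `L` turns `q` into `q̃`,
so monotonicity of `M` gives `L(M) ⊆ M^♯`; conversely, a point of `M^♯` is monotonically related
to all of `L(M)`, and maximality of `L(M)` puts it in `L(M)`. -/

section

variable {F : Type*} [NormedAddCommGroup F] [NormedSpace ℝ F]

lemma qS_LMap_sub_LMap (d e : BSp F) : qS F (LMap F d - LMap F e) = qB F (d - e) := by
  simp only [qS, LMap, Prod.mk_sub_mk, sub_apply, dual_def, qB, Prod.snd_sub,
    Prod.fst_sub, map_sub]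
  ring

lemma qS_sub_comm (p p' : BStar F) : qS F (p - p') = qS F (p' - p) := by
  simp only [qS, Prod.snd_sub, Prod.fst_sub, sub_apply, map_sub]
  ring

lemma GFn_le_zero_iff {M : Set (BSp F)} {p : BStar F} :
    GFn F M p ≤ 0 ↔ ∀ m ∈ M, 0 ≤ qS F (LMap F m - p) := by
  rw [GFn, EReal.neg_le_zero, le_iInf₂_iff]
  simp only [EReal.coe_nonneg]

lemma zero_le_GFn_of_mem {M : Set (BSp F)} {p : BStar F} {m : BSp F} (hm : m ∈ M)
    (h : qS F (LMap F m - p) ≤ 0) : 0 ≤ GFn F M p := by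
  rw [GFn, EReal.neg_nonneg]
  exact iInf₂_le_of_le m hm (by exact_mod_cast h)

lemma typeNI_of_forall_exists_mem {M : Set (BSp F)}
    (hsurj : ∀ xstar : StrongDual ℝ F, ∃ x : F, (x, xstar) ∈ M) : TypeNI F M := by
  intro p
  obtain ⟨x, hx⟩ := hsurj p.1
  exact zero_le_GFn_of_mem hx (by simp [qS, LMap])

lemma IsMaxMonotStar.mem_of_forall_qS_nonneg {N : Set (BStar F)} (hN : IsMaxMonotStar F N)
    {p : BStar F} (hp : ∀ n ∈ N, 0 ≤ qS F (n - p)) : p ∈ N := by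
  have hmono : IsMonotStar F (insert p N) := by
    rintro d (rfl | hd) e (rfl | he)
    · simp [qS]
    · rw [qS_sub_comm]; exact hp e he
    · exact hp d hd
    · exact hN.1 d hd e he
  rw [← hN.2 _ hmono (Set.subset_insert p N)]
  exact Set.mem_insert p N

lemma IsMonot.image_LMap_subset_sharp {M : Set (BSp F)} (hM : IsMonot F M) :
    LMap F '' M ⊆ Sharp F M := by
  rintro _ ⟨m₀, hm₀, rfl⟩
  refine GFn_le_zero_iff.2 fun m hm => ?_
  rw [qS_LMap_sub_LMap]
  exact hM m hm m₀ hm₀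

lemma sharp_subset_of_isMaxMonotStar {M : Set (BSp F)} (hLM : IsMaxMonotStar F (LMap F '' M)) :
    Sharp F M ⊆ LMap F '' M := by
  intro p hp
  refine hLM.mem_of_forall_qS_nonneg ?_
  rintro _ ⟨m, hm, rfl⟩
  exact GFn_le_zero_iff.1 hp m hm

end

/-- If `M` is maximally monotone and surjective, then `M` is of type (NI);
if moreover `L(M)` is maximally monotone in `B*`, then `M^♯ = L(M)`. -/
theorem typeNI_of_surjective (M : Set (BSp E)) (hM : IsMaxMonot E M)
    (hsurj : ∀ xstar : StrongDual ℝ E, ∃ x : E, (x, xstar) ∈ M) :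
    TypeNI E M ∧ (IsMaxMonotStar E (LMap E '' M) → Sharp E M = LMap E '' M) :=
  ⟨typeNI_of_forall_exists_mem hsurj, fun hLM =>
    (sharp_subset_of_isMaxMonotStar hLM).antisymm hM.1.image_LMap_subset_sharp⟩
end
end

section
/- Let V be a closed monotone linear subspace of B and let V^𝔸 = {(y*,y**) ∈ B* : y*(x) = y**(x*) for all (x,x*) ∈ V} be its adjoint subspace. Then V^𝔸 is a monotone subset of B* if and only if V is a maximally monotone subset of B of type (NI). -/
open NormedSpace

noncomputable section

variable (E : Type*) [NormedAddCommGroup E] [NormedSpace ℝ E]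

variable [CompleteSpace E] [Nontrivial E]

/-- The adjoint subspace `V^𝔸`. -/
def adjSet (V : Set (BSp E)) : Set (BStar E) :=
  {p | ∀ m ∈ V, p.1 m.1 = p.2 m.2}

end

/-!
Write `⟨b, p⟩ = p.1 b.1 + p.2 b.2` for the pairing of `B` with `B*` and `V^⊥` for the annihilator
of `V`. The map `(y*, y**) ↦ (y*, -y**)` carries `V^⊥` onto `V^𝔸` and negates `q̃`, and for
`m ∈ V` one has `q̃(Lm - p) = q(m) - ⟨m, p⟩ + q̃(p)`. So (NI) says `q̃(p) ≤ sup_V φ_p` with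
`φ_p = ⟨·, p⟩ - q`, and applied to `p ∈ V^⊥` it gives `q̃ ≤ 0` on `V^⊥`, i.e. `V^𝔸` is monotone.

Conversely assume `q̃ ≤ 0` on `V^⊥`. Let `v ∈ V` almost maximize `φ_p`, rescaled so that it also
maximizes `φ_p` on its ray. The discriminant of `t ↦ φ_p(v + t u)` bounds the derivative
`⟨·, p - Lv⟩` of `φ_p` at `v` on `V` by `2 √(sup φ_p - φ_p(v)) ‖·‖`; a Hahn–Banach extension `e` of
it puts `p - Lv - e` in `V^⊥`, and expanding `q̃(p - Lv - e) ≤ 0` gives `q̃(p) ≤ sup φ_p + O(‖e‖)`.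
Maximality then follows from (NI): if `b` is monotonically related to `V` and `w ∈ V^⊥`, (NI)
at `Lb + t w` gives `t ⟨b, w⟩ + t² q̃(w) ≤ 0` for all `t`, so `⟨b, w⟩ = 0`, and `b ∈ V` as `V` is
closed.
-/

open Filter Topology

theorem sq_le_four_mul_of_forall_mul_le {a c q : ℝ} (h : ∀ t : ℝ, t * a ≤ c + t ^ 2 * q) :
    a ^ 2 ≤ 4 * c * q := by
  have := discrim_le_zero (a := q) (b := -a) (c := c) fun t => by linear_combination h t
  rw [discrim] at this
  linarith

theorem le_of_forall_pos_le_add_mul_add_sq {x y a : ℝ} (h : ∀ N > 0, x ≤ y + a * N + N ^ 2) :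
    x ≤ y := by
  have hcont : Continuous fun N : ℝ => y + a * N + N ^ 2 := by fun_prop
  have hlim : Tendsto (fun N : ℝ => y + a * N + N ^ 2) (𝓝[>] 0) (𝓝 y) := by
    simpa using (hcont.tendsto 0).mono_left nhdsWithin_le_nhds
  exact ge_of_tendsto hlim (eventually_nhdsWithin_of_forall h)

theorem abs_apply_fst_le_norm_sq {X : Type*} [NormedAddCommGroup X] [NormedSpace ℝ X]
    (z : X × StrongDual ℝ X) : |z.2 z.1| ≤ ‖z‖ ^ 2 := by
  rw [← Real.norm_eq_abs, sq]
  exact (z.2.le_opNorm z.1).trans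
    (mul_le_mul (norm_snd_le z) (norm_fst_le z) (norm_nonneg _) (norm_nonneg _))

theorem Submodule.mem_of_forall_dual_eq_zero {X : Type*} [NormedAddCommGroup X]
    [NormedSpace ℝ X] {V : Submodule ℝ X} (hV : IsClosed (V : Set X)) {x : X}
    (hx : ∀ f : StrongDual ℝ X, (∀ m ∈ V, f m = 0) → f x = 0) : x ∈ V := by
  by_contra hxV
  obtain ⟨f, u, hfV, hfx⟩ := geometric_hahn_banach_closed_point V.convex hV hxV
  have hu : 0 < u := by simpa using hfV 0 V.zero_mem
  refine (hu.trans hfx).ne' (hx f fun m hm => ?_)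
  by_contra hm0
  have := hfV ((u / f m) • m) (V.smul_mem _ hm)
  rw [map_smul, smul_eq_mul, div_mul_cancel₀ _ hm0] at this
  exact this.false

section

variable {E : Type*} [NormedAddCommGroup E] [NormedSpace ℝ E]

noncomputable def pairing : BStar E ≃ₗ[ℝ] StrongDual ℝ (BSp E) := ContinuousLinearMap.coprodEquiv

@[simp]
theorem pairing_apply (p : BStar E) (b : BSp E) : pairing p b = p.1 b.1 + p.2 b.2 := rfl

theorem pairing_sub_apply (p q : BStar E) (b : BSp E) :
    pairing (p - q) b = pairing p b - pairing q b := by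
  simp only [pairing_apply, Prod.fst_sub, Prod.snd_sub, sub_apply]
  ring

theorem norm_pairing_symm_le (F : StrongDual ℝ (BSp E)) : ‖pairing.symm F‖ ≤ ‖F‖ :=
  max_le
    ((F.opNorm_comp_le _).trans
      (mul_le_of_le_one_right (norm_nonneg F) (ContinuousLinearMap.norm_inl_le_one ..)))
    ((F.opNorm_comp_le _).trans
      (mul_le_of_le_one_right (norm_nonneg F) (ContinuousLinearMap.norm_inr_le_one ..)))

theorem exists_pairing_eq_on_norm_le {V : Submodule ℝ (BSp E)} (w : BStar E) {N : ℝ}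
    (hN : 0 ≤ N) (hw : ∀ u ∈ V, |pairing w u| ≤ N * ‖u‖) :
    ∃ e : BStar E, (∀ u ∈ V, pairing e u = pairing w u) ∧ ‖e‖ ≤ N := by
  obtain ⟨F, hF, hFn⟩ := exists_extension_norm_eq V ((pairing w).comp V.subtypeL)
  refine ⟨pairing.symm F, fun u hu => by simpa using hF ⟨u, hu⟩,
    (norm_pairing_symm_le F).trans ?_⟩
  rw [hFn]
  exact ContinuousLinearMap.opNorm_le_bound _ hN fun u => by simpa using hw u u.2

def annihilator (V : Set (BSp E)) : Set (BStar E) := {w | ∀ m ∈ V, pairing w m = 0}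

noncomputable def reflect (p : BStar E) : BStar E := (p.1, -p.2)

theorem LMap_zero : LMap E (0 : BSp E) = 0 := by
  simp [LMap]

theorem pairing_LMap_self (v : BSp E) : pairing (LMap E v) v = 2 * qB E v := by
  simp only [pairing_apply, LMap, dual_def, qB]
  ring

theorem qB_smul (t : ℝ) (b : BSp E) : qB E (t • b) = t ^ 2 * qB E b := by
  simp only [qB, Prod.smul_fst, Prod.smul_snd, map_smul, smul_apply, smul_eq_mul]
  ring

theorem qB_add_smul (v u : BSp E) (t : ℝ) :
    qB E (v + t • u) = qB E v + t * pairing (LMap E v) u + t ^ 2 * qB E u := by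
  simp only [qB, LMap, pairing_apply, dual_def, Prod.fst_add, Prod.snd_add, Prod.smul_fst,
    Prod.smul_snd, map_add, map_smul, add_apply, smul_apply, smul_eq_mul]
  ring

theorem qS_reflect (p : BStar E) : qS E (reflect p) = -qS E p := by
  simp [qS, reflect]

theorem qS_LMap_sub (m : BSp E) (p : BStar E) :
    qS E (LMap E m - p) = qB E m - pairing p m + qS E p := by
  simp only [qS, qB, LMap, pairing_apply, Prod.fst_sub, Prod.snd_sub, map_sub, sub_apply,
    dual_def]
  ring

theorem qS_LMap_sub_LMap_add_smul (m b : BSp E) (t : ℝ) (w : BStar E) :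
    qS E (LMap E m - (LMap E b + t • w)) =
      qB E (b - m) - t * pairing w m + t * pairing w b + t ^ 2 * qS E w := by
  simp only [qS, qB, LMap, pairing_apply, Prod.fst_sub, Prod.snd_sub, Prod.fst_add,
    Prod.snd_add, Prod.smul_fst, Prod.smul_snd, map_sub, map_add, map_smul, sub_apply,
    add_apply, smul_apply, smul_eq_mul, dual_def]
  ring

theorem qS_sub_LMap_sub (p e : BStar E) (v : BSp E) :
    qS E (p - LMap E v - e) = qS E p - (pairing p v - qB E v) - (p.2 e.1 + e.2 p.1)
      + pairing e v + qS E e := by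
  simp only [qS, qB, LMap, pairing_apply, Prod.fst_sub, Prod.snd_sub, map_sub, sub_apply,
    dual_def]
  ring

theorem typeNI_iff {M : Set (BSp E)} :
    TypeNI E M ↔ ∀ (p : BStar E) (x : ℝ), (∀ m ∈ M, x ≤ qS E (LMap E m - p)) → x ≤ 0 := by
  simp only [TypeNI, GFn, EReal.neg_nonneg]
  refine ⟨fun hM p x hx => ?_, fun hM p => ?_⟩
  · exact EReal.coe_nonpos.1
      ((le_iInf₂ fun m hm => EReal.coe_le_coe_iff.2 (hx m hm)).trans (hM p))
  · by_contra! hpos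
    obtain ⟨x, hx0, hx⟩ := EReal.lt_iff_exists_real_btwn.1 hpos
    exact (EReal.coe_pos.1 hx0).not_ge
      (hM p x fun m hm => EReal.coe_le_coe_iff.1 (hx.le.trans (iInf₂_le m hm)))

theorem isMaxMonot_of_forall_mem {M : Set (BSp E)} (hM : IsMonot E M)
    (hmax : ∀ b, (∀ m ∈ M, 0 ≤ qB E (b - m)) → b ∈ M) : IsMaxMonot E M :=
  ⟨hM, fun _ hA' hMA' =>
    Set.Subset.antisymm (fun b hb => hmax b fun m hm => hA' b hb m (hMA' hm)) hMA'⟩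

variable {V : Submodule ℝ (BSp E)}

theorem reflect_mem_annihilator_iff {p : BStar E} :
    reflect p ∈ annihilator (V : Set (BSp E)) ↔ p ∈ adjSet E (V : Set (BSp E)) := by
  simp only [annihilator, adjSet, reflect, Set.mem_ofPred_eq, pairing_apply, neg_apply,
    add_neg_eq_zero]

theorem reflect_mem_adjSet_iff {p : BStar E} :
    reflect p ∈ adjSet E (V : Set (BSp E)) ↔ p ∈ annihilator (V : Set (BSp E)) := by
  simp only [annihilator, adjSet, reflect, Set.mem_ofPred_eq, pairing_apply, neg_apply,
    eq_neg_iff_add_eq_zero]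

theorem qS_nonpos_of_mem_annihilator (hadj : IsMonotStar E (adjSet E (V : Set (BSp E))))
    {w : BStar E} (hw : w ∈ annihilator (V : Set (BSp E))) : qS E w ≤ 0 := by
  have := hadj _ (reflect_mem_adjSet_iff.2 hw) 0 fun m _ => by simp
  rw [sub_zero (reflect w), qS_reflect] at this
  linarith

theorem isMonotStar_adjSet_of_typeNI (hV : ∀ m ∈ V, 0 ≤ qB E m)
    (hNI : TypeNI E (V : Set (BSp E))) : IsMonotStar E (adjSet E (V : Set (BSp E))) := by
  intro d hd e he
  have hde : reflect (d - e) ∈ annihilator (V : Set (BSp E)) :=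
    reflect_mem_annihilator_iff.2 fun m hm => by
      simp only [Prod.fst_sub, Prod.snd_sub, sub_apply, hd m hm, he m hm]
  have := typeNI_iff.1 hNI _ (qS E (reflect (d - e))) fun m hm => by
    rw [qS_LMap_sub, hde m hm]
    linarith [hV m hm]
  rw [qS_reflect] at this
  linarith

theorem pairing_eq_zero_of_forall_qB_sub_nonneg (hNI : TypeNI E (V : Set (BSp E)))
    {w : BStar E} (hw : w ∈ annihilator (V : Set (BSp E))) {b : BSp E}
    (hb : ∀ m ∈ V, 0 ≤ qB E (b - m)) : pairing w b = 0 := by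
  refine sq_nonpos_iff _ |>.1 ?_
  refine (sq_le_four_mul_of_forall_mul_le (c := 0) (q := -qS E w) fun t => ?_).trans_eq
    (by ring)
  have := typeNI_iff.1 hNI (LMap E b + t • w) (t * pairing w b + t ^ 2 * qS E w) fun m hm => by
    rw [qS_LMap_sub_LMap_add_smul, hw m hm]
    linarith [hb m hm]
  linear_combination this

variable {p : BStar E} {c : ℝ}

theorem sq_pairing_sub_LMap_le (hc : ∀ m ∈ V, pairing p m - qB E m ≤ c) {v u : BSp E}
    (hv : v ∈ V) (hu : u ∈ V) :
    pairing (p - LMap E v) u ^ 2 ≤ 4 * (c - (pairing p v - qB E v)) * qB E u := by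
  refine sq_le_four_mul_of_forall_mul_le fun t => ?_
  have := hc (v + t • u) (V.add_mem hv (V.smul_mem t hu))
  rw [map_add, map_smul, smul_eq_mul, qB_add_smul] at this
  rw [pairing_sub_apply]
  linear_combination this

variable (hV : ∀ m ∈ V, 0 ≤ qB E m)
include hV

theorem exists_pairing_eq_two_mul_qB (hc : ∀ m ∈ V, pairing p m - qB E m ≤ c) {v : BSp E}
    (hv : v ∈ V) :
    ∃ v' ∈ V, pairing p v - qB E v ≤ pairing p v' - qB E v' ∧ pairing p v' = 2 * qB E v' := by
  rcases (hV v hv).eq_or_lt with hq | hq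
  · refine ⟨v, hv, le_rfl, ?_⟩
    have := sq_pairing_sub_LMap_le hc V.zero_mem hv
    rw [← hq, mul_zero, LMap_zero, sub_zero p, sq_nonpos_iff] at this
    rw [← hq, mul_zero, this]
  · refine ⟨(pairing p v / (2 * qB E v)) • v, V.smul_mem _ hv, ?_, ?_⟩
    · rw [map_smul, qB_smul, smul_eq_mul, ← sub_nonneg]
      have hgain : pairing p v / (2 * qB E v) * pairing p v
          - (pairing p v / (2 * qB E v)) ^ 2 * qB E v - (pairing p v - qB E v)
          = (pairing p v - 2 * qB E v) ^ 2 / (4 * qB E v) := by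
        field_simp
        ring
      rw [hgain]
      positivity
    · rw [map_smul, qB_smul, smul_eq_mul]
      field_simp

theorem qS_le_add_of_almost_maximizer
    (hperp : ∀ w ∈ annihilator (V : Set (BSp E)), qS E w ≤ 0)
    (hc : ∀ m ∈ V, pairing p m - qB E m ≤ c) {v : BSp E} (hv : v ∈ V) {N : ℝ} (hN : 0 ≤ N)
    (hv_max : 4 * (c - (pairing p v - qB E v)) ≤ N ^ 2) :
    qS E p ≤ c + 2 * ‖p‖ * N + N ^ 2 := by
  obtain ⟨v', hv', hle, hcrit⟩ := exists_pairing_eq_two_mul_qB hV hc hv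
  have hsmall : ∀ u ∈ V, |pairing (p - LMap E v') u| ≤ N * ‖u‖ := by
    intro u hu
    refine abs_le_of_sq_le_sq ?_ (by positivity)
    calc pairing (p - LMap E v') u ^ 2 ≤ 4 * (c - (pairing p v' - qB E v')) * qB E u :=
          sq_pairing_sub_LMap_le hc hv' hu
      _ ≤ N ^ 2 * ‖u‖ ^ 2 :=
          mul_le_mul (by linarith) ((le_abs_self _).trans (abs_apply_fst_le_norm_sq u))
            (hV u hu) (sq_nonneg N)
      _ = (N * ‖u‖) ^ 2 := by ring
  obtain ⟨e, he, heN⟩ := exists_pairing_eq_on_norm_le _ hN hsmall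
  have hperp' := hperp (p - LMap E v' - e) fun m hm => by
    rw [pairing_sub_apply, he m hm, sub_self]
  have hev' : pairing e v' = 0 := by
    rw [he v' hv', pairing_sub_apply, pairing_LMap_self, hcrit, sub_self]
  rw [qS_sub_LMap_sub, hev'] at hperp'
  have hpe : p.2 e.1 ≤ ‖p‖ * ‖e‖ :=
    (Real.le_norm_self _).trans ((p.2.le_opNorm e.1).trans
      (mul_le_mul (norm_snd_le p) (norm_fst_le e) (norm_nonneg _) (by positivity)))
  have hep : e.2 p.1 ≤ ‖e‖ * ‖p‖ :=
    (Real.le_norm_self _).trans ((e.2.le_opNorm p.1).trans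
      (mul_le_mul (norm_snd_le e) (norm_fst_le p) (norm_nonneg _) (by positivity)))
  have hqe : -qS E e ≤ ‖e‖ ^ 2 := (neg_le_abs _).trans (abs_apply_fst_le_norm_sq e)
  have hpN : ‖p‖ * ‖e‖ ≤ ‖p‖ * N := mul_le_mul_of_nonneg_left heN (norm_nonneg p)
  have heN2 : ‖e‖ ^ 2 ≤ N ^ 2 := pow_le_pow_left₀ (norm_nonneg e) heN 2
  linarith [hc v' hv']

theorem qS_le_of_forall_pairing_sub_qB_le
    (hperp : ∀ w ∈ annihilator (V : Set (BSp E)), qS E w ≤ 0)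
    (hc : ∀ m ∈ V, pairing p m - qB E m ≤ c) : qS E p ≤ c := by
  set S := (fun m => pairing p m - qB E m) '' (V : Set (BSp E))
  have hS : S.Nonempty := ⟨_, 0, V.zero_mem, rfl⟩
  have hsup : ∀ m ∈ V, pairing p m - qB E m ≤ sSup S :=
    fun m hm => le_csSup ⟨c, Set.forall_mem_image.2 hc⟩ ⟨m, hm, rfl⟩
  refine le_trans ?_ (csSup_le hS (Set.forall_mem_image.2 hc))
  refine le_of_forall_pos_le_add_mul_add_sq (a := 2 * ‖p‖) fun N hN => ?_
  obtain ⟨_, ⟨v, hv, rfl⟩, hvS⟩ :=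
    exists_lt_of_lt_csSup hS (sub_lt_self (sSup S) (by positivity : 0 < N ^ 2 / 4))
  exact qS_le_add_of_almost_maximizer hV hperp hsup hv hN.le (by linarith)

theorem typeNI_of_qS_nonpos_on_annihilator
    (hperp : ∀ w ∈ annihilator (V : Set (BSp E)), qS E w ≤ 0) : TypeNI E (V : Set (BSp E)) := by
  refine typeNI_iff.2 fun p x hx => ?_
  have := qS_le_of_forall_pairing_sub_qB_le (c := qS E p - x) hV hperp fun m hm => by
    linarith [hx m hm, qS_LMap_sub m p]
  linarith

end

variable (E : Type*) [NormedAddCommGroup E] [NormedSpace ℝ E] [CompleteSpace E] [Nontrivial E]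

/-- Bauschke–Borwein–Wang–Yao: `V^𝔸` is monotone iff `V` is a
maximally monotone subset of `B` of type (NI). -/
theorem adj_monotone_iff_maxMonot_typeNI (V : Submodule ℝ (BSp E))
    (hVclosed : IsClosed (V : Set (BSp E))) (hVmono : IsMonot E (V : Set (BSp E))) :
    IsMonotStar E (adjSet E (V : Set (BSp E))) ↔
      IsMaxMonot E (V : Set (BSp E)) ∧ TypeNI E (V : Set (BSp E)) := by
  have hV : ∀ m ∈ V, 0 ≤ qB E m := fun m hm => by simpa using hVmono m hm 0 V.zero_mem
  refine ⟨fun hadj => ?_, fun h => isMonotStar_adjSet_of_typeNI hV h.2⟩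
  have hNI := typeNI_of_qS_nonpos_on_annihilator hV fun _ => qS_nonpos_of_mem_annihilator hadj
  refine ⟨isMaxMonot_of_forall_mem hVmono fun b hb => ?_, hNI⟩
  refine Submodule.mem_of_forall_dual_eq_zero hVclosed fun f hf => ?_
  have hf' : pairing.symm f ∈ annihilator (V : Set (BSp E)) := fun m hm => by
    rw [LinearEquiv.apply_symm_apply]
    exact hf m hm
  simpa using pairing_eq_zero_of_forall_qB_sub_nonneg hNI hf' hb
end

section
/- Let M be a maximally monotone subset of B of type (NI), let d*, e* ∈ B*, and let λ, μ > 0 with λ + μ = 1. Then λ·G_M(d*) + μ·G_M(e*) + λμ·q̃(e* − d*) ≥ 0 and λ·F_M(d*) + μ·F_M(e*) + λμ·q̃(e* − d*) ≥ 0. Moreover, if G_M(e*) = 0 then (G_M □ q̃)(e*) = 0, and if F_M(e*) = 0 then (F_M □ q̃)(e*) = 0. -/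
open NormedSpace

noncomputable section

variable (E : Type*) [NormedAddCommGroup E] [NormedSpace ℝ E]

/-!
For `x ∈ M` the function `p ↦ -q̃(Lx - p)` differs from `-q̃` by a continuous affine function,
and so does `p ↦ -(P_M(b) + q̃(p - Lb))` when `P_M(b)` is finite. Hence `G_M + q̃` and
`F_M + q̃` are suprema of affine functions and thus convex; by the identity
`q̃(λd + μe) = λq̃(d) + μq̃(e) - λμq̃(d - e)` this convexity says
`G_M(λd* + μe*) ≤ λG_M(d*) + μG_M(e*) + λμq̃(e* - d*)`, and likewise for `F_M`. Type (NI) makes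
the left side nonnegative, for `F_M` too since `F_M ≥ G_M` (`P_M ≤ 0` on the monotone set `M`).
If moreover `G_M(e*) = 0`, taking `d* = p`, dividing by `λ` and letting `λ → 0` gives
`G_M(p) + q̃(e* - p) ≥ 0`, with equality at `p = e*`.
-/

section QConvex

open Filter Topology

variable {E}

lemma qS_sub_comm_s17 (a b : BStar E) : qS E (a - b) = qS E (b - a) := by
  simp only [qS, Prod.fst_sub, Prod.snd_sub, sub_apply, map_sub]
  ring

lemma qS_smul_add_smul_sub (d e a : BStar E) {l m : ℝ} (hlm : l + m = 1) :
    qS E (l • d + m • e - a) =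
      l * qS E (d - a) + m * qS E (e - a) - l * m * qS E (e - d) := by
  obtain rfl : m = 1 - l := by linarith
  simp only [qS, Prod.fst_add, Prod.snd_add, Prod.smul_fst, Prod.smul_snd, Prod.fst_sub,
    Prod.snd_sub, add_apply, FunLike.coe_smul, Pi.smul_apply,
    sub_apply, map_add, map_smul, map_sub, smul_eq_mul]
  ring

/-- Convexity of `f + q̃` with the `q̃` terms cancelled, so that no `⊤ - ⊤` arises in `EReal`. -/
def IsQConvex (f : BStar E → EReal) : Prop :=
  ∀ d e : BStar E, ∀ l m : ℝ, 0 < l → 0 < m → l + m = 1 →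
    f (l • d + m • e) ≤ l * f d + m * f e + ((l * m * qS E (e - d) : ℝ) : EReal)

lemma isQConvex_neg_add_qS_sub (c : EReal) (a : BStar E) :
    IsQConvex (fun p => -(c + qS E (p - a))) := by
  intro d e l m hl hm hlm
  induction c using EReal.rec with
  | bot => simp [EReal.mul_top_of_pos, hl, hm, -EReal.coe_mul]
  | top => simp
  | coe c =>
    simp only [← EReal.coe_add, ← EReal.coe_neg, ← EReal.coe_mul, qS_smul_add_smul_sub d e a hlm]
    refine le_of_eq (congrArg _ ?_)
    linear_combination c * hlm

lemma isQConvex_neg_iInf {ι : Sort*} {g : ι → BStar E → EReal}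
    (hg : ∀ i, IsQConvex (fun p => -g i p)) : IsQConvex (fun p => -⨅ i, g i p) := by
  intro d e l m hl hm hlm
  refine EReal.neg_le.1 (le_iInf fun i => EReal.neg_le.1 ((hg i d e l m hl hm hlm).trans ?_))
  dsimp only
  gcongr <;> exact EReal.neg_le_neg_iff.2 (iInf_le _ i)

lemma isQConvex_GFn (M : Set (BSp E)) : IsQConvex (GFn E M) :=
  isQConvex_neg_iInf fun x => isQConvex_neg_iInf fun _ => by
    simpa only [qS_sub_comm_s17 (LMap E x), zero_add] using isQConvex_neg_add_qS_sub 0 (LMap E x)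

lemma isQConvex_FFn (M : Set (BSp E)) : IsQConvex (FFn E M) :=
  isQConvex_neg_iInf fun b => isQConvex_neg_add_qS_sub (PFn E M b) (LMap E b)

lemma IsQConvex.iInf_add_qS_eq_zero {f : BStar E → EReal} (hf : IsQConvex f)
    (hf_nonneg : ∀ p, 0 ≤ f p) {e : BStar E} (he : f e = 0) :
    ⨅ p, f p + qS E (e - p) = 0 := by
  refine le_antisymm ((iInf_le _ e).trans_eq (by simp [he, qS])) (le_iInf fun p => ?_)
  induction hfp : f p using EReal.rec with
  | bot => exact absurd (hfp ▸ hf_nonneg p) (by simp)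
  | top => simp
  | coe g =>
    set q := qS E (e - p)
    have hsegment : ∀ l ∈ Set.Ioo (0 : ℝ) 1, 0 ≤ g + (1 - l) * q := by
      rintro l ⟨hl0, hl1⟩
      have h := (hf_nonneg _).trans (hf p e l (1 - l) hl0 (by linarith) (by ring))
      rw [hfp, he, mul_zero, add_zero, ← EReal.coe_mul, ← EReal.coe_add, EReal.coe_nonneg] at h
      exact (mul_nonneg_iff_of_pos_left hl0).1 (by linarith)
    have hlim : Tendsto (fun l : ℝ => g + (1 - l) * q) (𝓝[>] 0) (𝓝 (g + q)) := by
      have hcont : Continuous fun l : ℝ => g + (1 - l) * q := by fun_prop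
      simpa using (hcont.tendsto 0).mono_left nhdsWithin_le_nhds
    exact_mod_cast ge_of_tendsto hlim (eventually_of_mem (Ioo_mem_nhdsGT one_pos) hsegment)

end QConvex

section Monotone

variable {E} {M : Set (BSp E)}

lemma PFn_nonpos_of_mem (hM : IsMonot E M) {x : BSp E} (hx : x ∈ M) : PFn E M x ≤ 0 := by
  rw [PFn, EReal.neg_le, neg_zero]
  exact le_iInf₂ fun y hy => EReal.coe_nonneg.2 (hM y hy x hx)

lemma GFn_le_FFn (hM : IsMonot E M) (p : BStar E) : GFn E M p ≤ FFn E M p := by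
  refine EReal.neg_le_neg_iff.2 (le_iInf₂ fun x hx => (iInf_le _ x).trans ?_)
  calc PFn E M x + qS E (p - LMap E x)
      ≤ 0 + qS E (p - LMap E x) := by gcongr; exact PFn_nonpos_of_mem hM hx
    _ = qS E (LMap E x - p) := by rw [zero_add, qS_sub_comm_s17]

end Monotone

variable [CompleteSpace E] [Nontrivial E]

/-- convexity-type inequalities for `G_M` and `F_M` when `M` is of
type (NI), and the consequent exactness statements for zeros. -/
theorem GFun_FFun_convex_ineq (M : Set (BSp E)) (hM : IsMaxMonot E M) (hNI : TypeNI E M)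
    (dstar estar : BStar E) (l m : ℝ) (hl : 0 < l) (hm : 0 < m) (hlm : l + m = 1) :
    0 ≤ (l : EReal) * GFn E M dstar + (m : EReal) * GFn E M estar +
        ((l * m * qS E (estar - dstar) : ℝ) : EReal) ∧
    0 ≤ (l : EReal) * FFn E M dstar + (m : EReal) * FFn E M estar +
        ((l * m * qS E (estar - dstar) : ℝ) : EReal) ∧
    (GFn E M estar = 0 → (⨅ p : BStar E, (GFn E M p + (qS E (estar - p) : EReal))) = 0) ∧
    (FFn E M estar = 0 → (⨅ p : BStar E, (FFn E M p + (qS E (estar - p) : EReal))) = 0) := by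
  have hF : ∀ p, 0 ≤ FFn E M p := fun p => (hNI p).trans (GFn_le_FFn hM.1 p)
  exact ⟨(hNI _).trans (isQConvex_GFn M dstar estar l m hl hm hlm),
    (hF _).trans (isQConvex_FFn M dstar estar l m hl hm hlm),
    (isQConvex_GFn M).iInf_add_qS_eq_zero hNI, (isQConvex_FFn M).iInf_add_qS_eq_zero hF⟩
end
end
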